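/- Let n ≥ 1, let V be an n×n nonnegative irreducible matrix, and for s, t > 0 let r⃗(s,t) ∈ ℝ^{2n} denote the unique solution of the Regularized Master Equations with all components strictly positive. Then for every interval [a, b] ⊂ (0, ∞) and every ε > 0, sup{ ‖r⃗(s,t)‖ : s ∈ [a,b], t ∈ (0, ε] } < ∞. In particular, for each fixed s > 0, r⃗(s,t) admits an accumulation point as t ↓ 0. -/

import Mathlib

/-!
Write `A = Vᵀ r + t` and `B = V r̃ + t`. The equations say `r B = r̃ A =: θ ∈ (0, 1)` and
`s² r = A (1 - θ)`; hence `4 s² r_i r̃_i ≤ 1`, `∑ r = ∑ r̃ =: S` and `t S ≤ n`.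

If `S` is large, pigeonhole among the `n + 1` disjoint windows `(δ_{m+1} S, δ_m S]`, where
`δ_{m+1} = η δ_m²`, gives a window containing no `r_i`; let `P` be the set of indices above
it. On `P` we have `r̃ ≤ 1 / (4 s² δ_m S)` and off `P` we have `r ≤ η δ_m² S`, so the
balance of the flux `∑ V_ij r_i r̃_j` across `P` makes the flux out of `P` tiny. An edge
`i → j` leaving `P` would then force `r̃_j` to be so small that `θ_j ≤ 1/2`, whence
`r_j ≥ A_j / (2 s²) ≥ V_ij r_i / (2 s²)` lies above the window, i.e. `j ∈ P`. By
irreducibility `P` contains every index, and then `S = ∑ r̃ ≤ n / (4 s² δ_m S)` bounds `S`.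
Accumulation points as `t ↓ 0` exist by compactness.
-/
open Matrix BigOperators Filter

/-- `p = (r, r̃)` is a strictly positive solution of the Regularized Master Equations
for the nonnegative matrix `V` at parameters `s, t > 0`. -/
def RMEsol {n : ℕ} (V : Matrix (Fin n) (Fin n) ℝ) (s t : ℝ)
    (p : (Fin n → ℝ) × (Fin n → ℝ)) : Prop :=
  (∀ i, 0 < p.1 i) ∧ (∀ i, 0 < p.2 i) ∧
  (∀ i, p.1 i = (Vᵀ.mulVec p.1 i + t) /
      (s ^ 2 + (V.mulVec p.2 i + t) * (Vᵀ.mulVec p.1 i + t))) ∧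
  (∀ i, p.2 i = (V.mulVec p.2 i + t) /
      (s ^ 2 + (V.mulVec p.2 i + t) * (Vᵀ.mulVec p.1 i + t)))

theorem exists_le_card_forall_notMem_Ioc {ι : Type*} [Fintype ι] {u : ℕ → ℝ}
    (hu : Antitone u) (x : ι → ℝ) :
    ∃ m ≤ Fintype.card ι, ∀ i, x i ∉ Set.Ioc (u (m + 1)) (u m) := by
  by_contra! h
  choose g hg using fun m : Fin (Fintype.card ι + 1) => h m (Nat.lt_succ_iff.1 m.2)
  obtain ⟨m₁, m₂, hne, heq⟩ := Fintype.exists_ne_map_eq_of_card_lt g (by simp)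
  -- the intervals `(u (m + 1), u m]` of an antitone sequence are pairwise disjoint
  have key : ∀ k l : Fin (Fintype.card ι + 1), k < l → g k ≠ g l := fun k l hkl hkl' => by
    have hk := (hg k).1
    rw [hkl'] at hk
    linarith [(hg l).2, hu (Nat.succ_le_of_lt hkl)]
  rcases lt_or_gt_of_ne hne with hlt | hlt
  · exact key _ _ hlt heq
  · exact key _ _ hlt heq.symm

theorem Matrix.IsIrreducible.forall_of_closed {ι R : Type*} [Ring R] [LinearOrder R]
    {A : Matrix ι ι R} (hA : A.IsIrreducible) {p : ι → Prop}
    (hp : ∀ i j, p i → 0 < A i j → p j) {i : ι} (hi : p i) (j : ι) : p j := by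
  let := toQuiver A
  obtain ⟨q, -⟩ := hA.connected i j
  induction q with
  | nil => exact hi
  | cons _ e ih => exact hp _ _ ih e.down

theorem exists_pos_forall_le_of_pos {α : Type*} [Finite α] (f : α → ℝ) :
    ∃ v > 0, ∀ a, 0 < f a → v ≤ f a := by
  obtain ⟨v, hv, hmin⟩ := Set.exists_min_image (insert 1 (Set.range f ∩ Set.Ioi 0)) id
    (((Set.finite_range f).inter_of_left _).insert 1) (Set.insert_nonempty _ _)
  refine ⟨v, ?_, fun a ha => hmin _ (Or.inr ⟨⟨a, rfl⟩, ha⟩)⟩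
  rcases hv with rfl | ⟨-, hv⟩
  exacts [one_pos, hv]

-- closed form of `δ₀ = η`, `δ_{m+1} = η δ_m²`
def ladder (η : ℝ) (m : ℕ) : ℝ := η ^ (2 ^ (m + 1) - 1)

section Ladder

variable {η : ℝ}

theorem ladder_pos (hη : 0 < η) (m : ℕ) : 0 < ladder η m := pow_pos hη _

theorem ladder_le (hη₀ : 0 ≤ η) (hη₁ : η ≤ 1) (m : ℕ) : ladder η m ≤ η :=
  pow_le_of_le_one hη₀ hη₁ (by have := Nat.one_lt_two_pow (n := m + 1) (by omega); omega)

theorem ladder_antitone (hη₀ : 0 ≤ η) (hη₁ : η ≤ 1) : Antitone (ladder η) :=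
  fun _ _ hmk => pow_le_pow_of_le_one hη₀ hη₁
    (Nat.sub_le_sub_right (Nat.pow_le_pow_right two_pos (Nat.succ_le_succ hmk)) 1)

theorem ladder_succ (m : ℕ) : ladder η (m + 1) = η * ladder η m ^ 2 := by
  have : 2 ^ (m + 1 + 1) - 1 = (2 ^ (m + 1) - 1) * 2 + 1 := by
    have := Nat.one_le_two_pow (n := m + 1)
    rw [pow_succ]
    omega
  rw [ladder, ladder, this, pow_succ, pow_mul]
  ring

end Ladder

section Flux

variable {ι : Type*} (V : Matrix ι ι ℝ) (x y : ι → ℝ)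

def flux (P Q : Finset ι) : ℝ := ∑ i ∈ P, ∑ j ∈ Q, V i j * (x i * y j)

theorem sum_mul_mulVec_eq_flux [Fintype ι] (P : Finset ι) :
    ∑ i ∈ P, x i * (V *ᵥ y) i = flux V x y P Finset.univ := by
  simp only [flux, mulVec, dotProduct, Finset.mul_sum]
  exact Finset.sum_congr rfl fun _ _ => Finset.sum_congr rfl fun _ _ => by ring

theorem sum_mul_transpose_mulVec_eq_flux [Fintype ι] (P : Finset ι) :
    ∑ j ∈ P, y j * (Vᵀ *ᵥ x) j = flux V x y Finset.univ P := by
  simp only [flux, mulVec, dotProduct, transpose_apply, Finset.mul_sum]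
  rw [Finset.sum_comm]
  exact Finset.sum_congr rfl fun _ _ => Finset.sum_congr rfl fun _ _ => by ring

theorem single_le_flux {V x y} (hV : ∀ i j, 0 ≤ V i j) (hx : ∀ i, 0 ≤ x i)
    (hy : ∀ j, 0 ≤ y j) {P Q : Finset ι} {i j : ι} (hi : i ∈ P) (hj : j ∈ Q) :
    V i j * (x i * y j) ≤ flux V x y P Q := by
  have hnn : ∀ a b, 0 ≤ V a b * (x a * y b) := fun a b =>
    mul_nonneg (hV a b) (mul_nonneg (hx a) (hy b))
  exact (Finset.single_le_sum (fun b _ => hnn i b) hj).trans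
    (Finset.single_le_sum (fun a _ => Finset.sum_nonneg fun b _ => hnn a b) hi)

theorem flux_univ_right [Fintype ι] [DecidableEq ι] (P : Finset ι) :
    flux V x y P Finset.univ = flux V x y P P + flux V x y P Pᶜ := by
  simp only [flux, ← Finset.sum_add_distrib, Finset.sum_add_sum_compl]

theorem flux_univ_left [Fintype ι] [DecidableEq ι] (P : Finset ι) :
    flux V x y Finset.univ P = flux V x y P P + flux V x y Pᶜ P :=
  (Finset.sum_add_sum_compl P _).symm

end Flux

section MulVec

variable {ι : Type*} [Fintype ι] {V : Matrix ι ι ℝ} {x : ι → ℝ}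

theorem mulVec_apply_nonneg (hV : ∀ i j, 0 ≤ V i j) (hx : ∀ j, 0 ≤ x j) (i : ι) :
    0 ≤ (V *ᵥ x) i :=
  Finset.sum_nonneg fun j _ => mul_nonneg (hV i j) (hx j)

theorem mul_le_mulVec_apply (hV : ∀ i j, 0 ≤ V i j) (hx : ∀ j, 0 ≤ x j) (i j : ι) :
    V i j * x j ≤ (V *ᵥ x) i :=
  Finset.single_le_sum (f := fun j => V i j * x j) (fun j _ => mul_nonneg (hV i j) (hx j))
    (Finset.mem_univ j)

theorem mulVec_apply_le {C : ℝ} (hC : ∀ i j, V i j ≤ C) (hx : ∀ j, 0 ≤ x j) (i : ι) :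
    (V *ᵥ x) i ≤ C * ∑ j, x j := by
  rw [Finset.mul_sum]
  exact Finset.sum_le_sum fun j _ => mul_le_mul_of_nonneg_right (hC i j) (hx j)

end MulVec

namespace RMEsol

variable {n : ℕ} {V : Matrix (Fin n) (Fin n) ℝ} {s t : ℝ} {r rt : Fin n → ℝ}
  (h : RMEsol V s t (r, rt))
include h

theorem fst_pos (i : Fin n) : 0 < r i := h.1 i

theorem snd_pos (i : Fin n) : 0 < rt i := h.2.1 i

theorem fst_eq (i : Fin n) :
    r i = ((Vᵀ *ᵥ r) i + t) / (s ^ 2 + ((V *ᵥ rt) i + t) * ((Vᵀ *ᵥ r) i + t)) :=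
  h.2.2.1 i

theorem snd_eq (i : Fin n) :
    rt i = ((V *ᵥ rt) i + t) / (s ^ 2 + ((V *ᵥ rt) i + t) * ((Vᵀ *ᵥ r) i + t)) :=
  h.2.2.2 i

theorem denom_ne_zero (i : Fin n) :
    s ^ 2 + ((V *ᵥ rt) i + t) * ((Vᵀ *ᵥ r) i + t) ≠ 0 := fun hD => by
  have := h.fst_eq i
  rw [hD, div_zero] at this
  exact (h.fst_pos i).ne' this

theorem fst_mul_denom (i : Fin n) :
    r i * (s ^ 2 + ((V *ᵥ rt) i + t) * ((Vᵀ *ᵥ r) i + t)) = (Vᵀ *ᵥ r) i + t := by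
  rw [h.fst_eq i]; exact div_mul_cancel₀ _ (h.denom_ne_zero i)

theorem snd_mul_denom (i : Fin n) :
    rt i * (s ^ 2 + ((V *ᵥ rt) i + t) * ((Vᵀ *ᵥ r) i + t)) = (V *ᵥ rt) i + t := by
  rw [h.snd_eq i]; exact div_mul_cancel₀ _ (h.denom_ne_zero i)

theorem denom_pos (i : Fin n) : 0 < s ^ 2 + ((V *ᵥ rt) i + t) * ((Vᵀ *ᵥ r) i + t) := by
  have h₁ := h.fst_mul_denom i
  have h₂ := h.snd_mul_denom i
  have hD := h.denom_ne_zero i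
  have := h.fst_pos i
  have := h.snd_pos i
  set D := s ^ 2 + ((V *ᵥ rt) i + t) * ((Vᵀ *ᵥ r) i + t) with hD_def
  have hquad : D = s ^ 2 + r i * rt i * D ^ 2 := by
    linear_combination hD_def - ((V *ᵥ rt) i + t) * h₁ - r i * D * h₂
  have : 0 < r i * rt i * D ^ 2 := by positivity
  nlinarith

theorem fst_mul_eq_snd_mul (i : Fin n) :
    r i * ((V *ᵥ rt) i + t) = rt i * ((Vᵀ *ᵥ r) i + t) := by
  linear_combination rt i * h.fst_mul_denom i - r i * h.snd_mul_denom i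

theorem sq_mul_fst (i : Fin n) :
    s ^ 2 * r i = ((Vᵀ *ᵥ r) i + t) * (1 - rt i * ((Vᵀ *ᵥ r) i + t)) := by
  linear_combination h.fst_mul_denom i - ((Vᵀ *ᵥ r) i + t) * h.fst_mul_eq_snd_mul i

theorem fst_mul_lt_one (hs : s ≠ 0) (i : Fin n) : r i * ((V *ᵥ rt) i + t) < 1 := by
  have hD := h.denom_pos i
  have : r i * ((V *ᵥ rt) i + t) * (s ^ 2 + ((V *ᵥ rt) i + t) * ((Vᵀ *ᵥ r) i + t)) =
      ((V *ᵥ rt) i + t) * ((Vᵀ *ᵥ r) i + t) := by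
    linear_combination ((V *ᵥ rt) i + t) * h.fst_mul_denom i
  have hs₂ : 0 < s ^ 2 := by positivity
  refine (mul_lt_iff_lt_one_left hD).1 ?_
  rw [this]
  linarith

theorem four_sq_mul_fst_mul_snd_le_one (i : Fin n) : 4 * s ^ 2 * (r i * rt i) ≤ 1 := by
  -- with `θ = rt A`, this reads `4 θ (1 - θ) ≤ 1`
  have : 4 * s ^ 2 * (r i * rt i) = 1 - (2 * (rt i * ((Vᵀ *ᵥ r) i + t)) - 1) ^ 2 := by
    linear_combination 4 * rt i * h.sq_mul_fst i
  linarith [sq_nonneg (2 * (rt i * ((Vᵀ *ᵥ r) i + t)) - 1)]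

theorem flux_balance (P : Finset (Fin n)) :
    flux V r rt P Pᶜ + t * ∑ i ∈ P, r i = flux V r rt Pᶜ P + t * ∑ i ∈ P, rt i := by
  have hsum := Finset.sum_congr rfl fun i (_ : i ∈ P) => h.fst_mul_eq_snd_mul i
  simp only [mul_add, Finset.sum_add_distrib, ← Finset.sum_mul] at hsum
  rw [sum_mul_mulVec_eq_flux, sum_mul_transpose_mulVec_eq_flux, flux_univ_right,
    flux_univ_left] at hsum
  linear_combination hsum

theorem sum_fst_eq_sum_snd (ht : t ≠ 0) : ∑ i, r i = ∑ i, rt i := by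
  have := h.flux_balance Finset.univ
  simp only [Finset.compl_univ, flux, Finset.sum_empty, Finset.sum_const_zero, zero_add] at this
  exact mul_left_cancel₀ ht this

theorem mul_sum_fst_le (hV : ∀ i j, 0 ≤ V i j) (hs : s ≠ 0) : t * ∑ i, r i ≤ n := by
  rw [Finset.mul_sum]
  calc ∑ i, t * r i ≤ ∑ _i : Fin n, (1 : ℝ) := Finset.sum_le_sum fun i _ => by
        nlinarith [h.fst_mul_lt_one hs i, h.fst_pos i,
          mulVec_apply_nonneg hV (fun j => (h.snd_pos j).le) i]
    _ = n := by simp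

theorem snd_mul_le_one {L : ℝ} {j : Fin n} (hj : L ≤ r j) : rt j * (4 * s ^ 2 * L) ≤ 1 :=
  calc rt j * (4 * s ^ 2 * L) ≤ rt j * (4 * s ^ 2 * r j) :=
        mul_le_mul_of_nonneg_left (by gcongr) (h.snd_pos j).le
    _ = 4 * s ^ 2 * (r j * rt j) := by ring
    _ ≤ 1 := h.four_sq_mul_fst_mul_snd_le_one j

theorem flux_mul_le_card_mul_card {C L L' : ℝ} (hC : ∀ i j, V i j ≤ C) (hC₀ : 0 ≤ C)
    (hL : 0 ≤ L) (hL' : 0 ≤ L') {P Q : Finset (Fin n)} (hP : ∀ i ∈ P, r i ≤ L')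
    (hQ : ∀ j ∈ Q, L ≤ r j) :
    flux V r rt P Q * (4 * s ^ 2 * L) ≤ P.card * Q.card * (C * L') := by
  have hterm : ∀ i ∈ P, ∀ j ∈ Q, V i j * r i * (rt j * (4 * s ^ 2 * L)) ≤ C * L' := by
    intro i hi j hj
    calc V i j * r i * (rt j * (4 * s ^ 2 * L)) ≤ C * L' * 1 :=
          mul_le_mul (mul_le_mul (hC i j) (hP i hi) (h.fst_pos i).le hC₀)
            (h.snd_mul_le_one (hQ j hj)) (by have := h.snd_pos j; positivity) (by positivity)
      _ = C * L' := mul_one _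
  calc flux V r rt P Q * (4 * s ^ 2 * L)
      = ∑ i ∈ P, ∑ j ∈ Q, V i j * r i * (rt j * (4 * s ^ 2 * L)) := by
        simp only [flux, Finset.sum_mul]
        exact Finset.sum_congr rfl fun _ _ => Finset.sum_congr rfl fun _ _ => by ring
    _ ≤ ∑ _i ∈ P, ∑ _j ∈ Q, C * L' :=
        Finset.sum_le_sum fun i hi => Finset.sum_le_sum fun j hj => hterm i hi j hj
    _ = P.card * Q.card * (C * L') := by simp [mul_assoc]

theorem flux_mul_le (hV : ∀ i j, 0 ≤ V i j) (hs : s ≠ 0) (ht : 0 ≤ t) {C L L' : ℝ}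
    (hC : ∀ i j, V i j ≤ C) (hC₀ : 0 ≤ C) (hL : 0 ≤ L) (hL' : 0 ≤ L')
    {P : Finset (Fin n)} (hP : ∀ i ∈ P, L ≤ r i) (hPc : ∀ i ∉ P, r i ≤ L') :
    flux V r rt P Pᶜ * (4 * s ^ 2 * L * ∑ i, r i) ≤ n ^ 2 * (C * L' * ∑ i, r i + 1) := by
  set S := ∑ i, r i
  have hS : 0 ≤ S := Finset.sum_nonneg fun i _ => (h.fst_pos i).le
  have hcard : ∀ Q : Finset (Fin n), Q.card ≤ n := fun Q =>
    (Finset.card_le_univ Q).trans_eq (Fintype.card_fin n)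
  have hin : flux V r rt Pᶜ P * (4 * s ^ 2 * L) ≤ n ^ 2 * (C * L') := by
    refine (h.flux_mul_le_card_mul_card hC hC₀ hL hL'
      (fun i hi => hPc i (Finset.mem_compl.1 hi)) hP).trans ?_
    rw [sq]
    gcongr <;> exact hcard _
  have hrtsum : t * ((∑ j ∈ P, rt j) * (4 * s ^ 2 * L)) ≤ t * n := by
    rw [Finset.sum_mul]
    refine mul_le_mul_of_nonneg_left ?_ ht
    calc ∑ j ∈ P, rt j * (4 * s ^ 2 * L) ≤ ∑ _j ∈ P, (1 : ℝ) :=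
          Finset.sum_le_sum fun j hj => h.snd_mul_le_one (hP j hj)
      _ ≤ n := by simpa using (Nat.cast_le.2 (hcard P) : (P.card : ℝ) ≤ n)
  have hout : flux V r rt P Pᶜ ≤ flux V r rt Pᶜ P + t * ∑ i ∈ P, rt i := by
    have := mul_nonneg ht (Finset.sum_nonneg fun i (_ : i ∈ P) => (h.fst_pos i).le)
    linarith [h.flux_balance P]
  calc flux V r rt P Pᶜ * (4 * s ^ 2 * L * S)
      ≤ (flux V r rt Pᶜ P + t * ∑ i ∈ P, rt i) * (4 * s ^ 2 * L * S) :=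
        mul_le_mul_of_nonneg_right hout (by positivity)
    _ = flux V r rt Pᶜ P * (4 * s ^ 2 * L) * S
          + t * ((∑ j ∈ P, rt j) * (4 * s ^ 2 * L)) * S := by ring
    _ ≤ n ^ 2 * (C * L') * S + t * n * S := by gcongr
    _ ≤ n ^ 2 * (C * L' * S + 1) := by nlinarith [h.mul_sum_fst_le hV hs]

theorem le_two_sq_mul_fst_of_snd_mul_le (hV : ∀ i j, 0 ≤ V i j) (ht : 0 ≤ t) {C : ℝ}
    (hC : ∀ i j, V i j ≤ C) (htC : t ≤ C) (hS : 1 ≤ ∑ k, r k) {j : Fin n}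
    (hj : rt j * (4 * C * ∑ k, r k) ≤ 1) : (Vᵀ *ᵥ r) j + t ≤ 2 * s ^ 2 * r j := by
  have hA₀ : 0 ≤ (Vᵀ *ᵥ r) j + t :=
    add_nonneg (mulVec_apply_nonneg (fun a b => hV b a) (fun k => (h.fst_pos k).le) j) ht
  have hA : (Vᵀ *ᵥ r) j + t ≤ 2 * C * ∑ k, r k := by
    have := mulVec_apply_le (V := Vᵀ) (fun a b => hC b a) (fun k => (h.fst_pos k).le) j
    nlinarith [le_mul_of_one_le_right (ht.trans htC) hS]
  have hθ : rt j * ((Vᵀ *ᵥ r) j + t) ≤ 1 / 2 := by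
    nlinarith [mul_le_mul_of_nonneg_left hA (h.snd_pos j).le]
  nlinarith [h.sq_mul_fst j, mul_le_mul_of_nonneg_left hθ hA₀]

theorem lt_fst_of_gap (hV : ∀ i j, 0 ≤ V i j) (hs : s ≠ 0) (ht : 0 ≤ t) {C v L L' : ℝ}
    (hC : ∀ i j, V i j ≤ C) (htC : t ≤ C) (hv : ∀ i j, 0 < V i j → v ≤ V i j)
    (hv₀ : 0 < v) (hS : 1 ≤ ∑ k, r k) (hL : 0 < L) (hgap : ∀ k, r k ∉ Set.Ioc L' L)
    (hL'L : 2 * s ^ 2 * L' ≤ v * L)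
    (hLS : C * n ^ 2 * (C * L' * ∑ k, r k + 1) ≤ s ^ 2 * v * L ^ 2)
    {i j : Fin n} (hi : L < r i) (hij : 0 < V i j) : L < r j := by
  classical
  set S := ∑ k, r k
  by_contra! hj
  have hjL' : r j ≤ L' := not_lt.1 fun h' => hgap j ⟨h', hj⟩
  set P := Finset.univ.filter fun k => L < r k
  have hC₀ : 0 < C := hij.trans_le (hC i j)
  have hvL : v * L < V i j * r i := by
    calc v * L < v * r i := by gcongr
      _ ≤ V i j * r i := mul_le_mul_of_nonneg_right (hv i j hij) (h.fst_pos i).le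
  have hflux := h.flux_mul_le hV hs ht hC hC₀.le hL.le ((h.fst_pos j).le.trans hjL')
    (P := P) (fun k hk => (Finset.mem_filter.1 hk).2.le)
    (fun k hk => not_lt.1 fun h' => hgap k ⟨h', not_lt.1 fun h'' => hk (by simp [P, h''])⟩)
  have hterm : V i j * r i * rt j ≤ flux V r rt P Pᶜ := by
    rw [mul_assoc]
    exact single_le_flux hV (fun k => (h.fst_pos k).le) (fun k => (h.snd_pos k).le)
      (by simp [P, hi]) (by simp [P, hj])
  -- the flux out of `P` is so small that `rt j ≤ 1 / (4 C S)`
  have hrtj : rt j * (4 * C * S) ≤ 1 := by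
    have hvLrt : v * L * rt j * (4 * s ^ 2 * L * S) ≤ n ^ 2 * (C * L' * S + 1) :=
      (mul_le_mul_of_nonneg_right ((mul_le_mul_of_nonneg_right hvL.le (h.snd_pos j).le).trans
        hterm) (by positivity)).trans hflux
    have hs₂ : 0 < s ^ 2 * v * L ^ 2 := by positivity
    refine le_of_mul_le_mul_left ?_ hs₂
    calc s ^ 2 * v * L ^ 2 * (rt j * (4 * C * S))
        = C * (v * L * rt j * (4 * s ^ 2 * L * S)) := by ring
      _ ≤ C * (n ^ 2 * (C * L' * S + 1)) := mul_le_mul_of_nonneg_left hvLrt hC₀.le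
      _ ≤ s ^ 2 * v * L ^ 2 * 1 := by rw [mul_one, ← mul_assoc]; exact hLS
  have hVr : V i j * r i ≤ (Vᵀ *ᵥ r) j :=
    mul_le_mulVec_apply (V := Vᵀ) (fun a b => hV b a) (fun k => (h.fst_pos k).le) j i
  refine lt_irrefl (v * L) ?_
  calc v * L < V i j * r i := hvL
    _ ≤ (Vᵀ *ᵥ r) j + t := by linarith
    _ ≤ 2 * s ^ 2 * r j := h.le_two_sq_mul_fst_of_snd_mul_le hV ht hC htC hS hrtj
    _ ≤ 2 * s ^ 2 * L' := by gcongr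
    _ ≤ v * L := hL'L

theorem four_sq_mul_mul_sum_le (ht : t ≠ 0) {L : ℝ} (hL : ∀ j, L ≤ r j) :
    4 * s ^ 2 * L * ∑ i, r i ≤ n := by
  rw [h.sum_fst_eq_sum_snd ht, Finset.mul_sum]
  calc ∑ i, 4 * s ^ 2 * L * rt i ≤ ∑ _i : Fin n, (1 : ℝ) :=
        Finset.sum_le_sum fun i _ => by rw [mul_comm]; exact h.snd_mul_le_one (hL i)
    _ = n := by simp

theorem four_sq_mul_ladder_mul_sq_sum_le (hV : V.IsIrreducible) (hs : s ≠ 0) (ht : 0 < t)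
    {C v η : ℝ} (hC : ∀ i j, V i j ≤ C) (htC : t ≤ C)
    (hv : ∀ i j, 0 < V i j → v ≤ V i j) (hv₀ : 0 < v) (hη₀ : 0 < η)
    (hηn : (n + 1) * η < 1) (hηv : 2 * s ^ 2 * η ≤ v)
    (hηC : 2 * C ^ 2 * n ^ 2 * η ≤ s ^ 2 * v) (hS : 1 ≤ ∑ i, r i)
    (hSC : 2 * C * n ^ 2 ≤ s ^ 2 * v * ladder η n ^ 2 * (∑ i, r i) ^ 2) :
    4 * s ^ 2 * ladder η n * (∑ i, r i) ^ 2 ≤ n := by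
  set S := ∑ i, r i
  have hS₀ : 0 ≤ S := zero_le_one.trans hS
  have hη₁ : η ≤ 1 := by nlinarith
  obtain ⟨m, hm, hgap⟩ :=
    exists_le_card_forall_notMem_Ioc ((ladder_antitone hη₀.le hη₁).mul_const hS₀) r
  rw [Fintype.card_fin] at hm
  have hδ : ladder η n ≤ ladder η m := ladder_antitone hη₀.le hη₁ hm
  set L := ladder η m * S
  have hL : 0 < L := mul_pos (ladder_pos hη₀ m) (one_pos.trans_le hS)
  have hL'L : 2 * s ^ 2 * (ladder η (m + 1) * S) ≤ v * L := by
    calc 2 * s ^ 2 * (ladder η (m + 1) * S) = 2 * s ^ 2 * η * ladder η m * L := by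
          rw [ladder_succ]; ring
      _ ≤ 2 * s ^ 2 * η * 1 * L := by gcongr; exact (ladder_le hη₀.le hη₁ m).trans hη₁
      _ ≤ v * L := by rw [mul_one]; exact mul_le_mul_of_nonneg_right hηv hL.le
  have hLS : C * n ^ 2 * (C * (ladder η (m + 1) * S) * S + 1) ≤ s ^ 2 * v * L ^ 2 := by
    have hnL : 2 * C * n ^ 2 ≤ s ^ 2 * v * L ^ 2 := by
      refine hSC.trans ?_
      rw [mul_pow, ← mul_assoc]
      gcongr
      exact (ladder_pos hη₀ n).le
    calc C * n ^ 2 * (C * (ladder η (m + 1) * S) * S + 1)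
        = C ^ 2 * n ^ 2 * η * L ^ 2 + C * n ^ 2 := by rw [ladder_succ]; ring
      _ ≤ s ^ 2 * v / 2 * L ^ 2 + s ^ 2 * v / 2 * L ^ 2 :=
          add_le_add (mul_le_mul_of_nonneg_right (by linarith) (sq_nonneg L)) (by linarith)
      _ = s ^ 2 * v * L ^ 2 := by ring
  have hclosed : ∀ i j, L < r i → 0 < V i j → L < r j := fun i j hi hij =>
    h.lt_fst_of_gap hV.nonneg hs ht.le hC htC hv hv₀ hS hL hgap hL'L hLS hi hij
  obtain ⟨i₀, -, hi₀⟩ : ∃ i ∈ Finset.univ, L < r i := by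
    refine Finset.exists_lt_of_sum_lt ?_
    simp only [Finset.sum_const, Finset.card_univ, Fintype.card_fin, nsmul_eq_mul]
    calc n * L ≤ n * (η * S) := by
          gcongr; exact mul_le_mul_of_nonneg_right (ladder_le hη₀.le hη₁ m) hS₀
      _ < S := by nlinarith
  calc 4 * s ^ 2 * ladder η n * S ^ 2 = 4 * s ^ 2 * (ladder η n * S) * S := by ring
    _ ≤ 4 * s ^ 2 * L * S := by gcongr; exact mul_le_mul_of_nonneg_right hδ hS₀
    _ ≤ n := h.four_sq_mul_mul_sum_le ht.ne' fun j => (hV.forall_of_closed hclosed hi₀ j).le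

theorem norm_le_sum (ht : t ≠ 0) : ‖(r, rt)‖ ≤ ∑ i, r i := by
  have key : ∀ x : Fin n → ℝ, (∀ i, 0 < x i) → ‖x‖ ≤ ∑ i, x i := fun x hx =>
    (pi_norm_le_iff_of_nonneg (Finset.sum_nonneg fun i _ => (hx i).le)).2 fun i => by
      rw [Real.norm_of_nonneg (hx i).le]
      exact Finset.single_le_sum (fun j _ => (hx j).le) (Finset.mem_univ i)
  rw [Prod.norm_def]
  exact max_le (key r h.fst_pos) ((key rt h.snd_pos).trans (h.sum_fst_eq_sum_snd ht).ge)

end RMEsol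

open Topology in
theorem exists_sum_fst_le {n : ℕ} {V : Matrix (Fin n) (Fin n) ℝ} (hV : V.IsIrreducible)
    {a b ε : ℝ} (ha : 0 < a) :
    ∃ S₀, ∀ s ∈ Set.Icc a b, ∀ t ∈ Set.Ioc 0 ε, ∀ r rt,
      RMEsol V s t (r, rt) → ∑ i, r i ≤ S₀ := by
  obtain ⟨v, hv₀, hv⟩ := exists_pos_forall_le_of_pos fun q : Fin n × Fin n => V q.1 q.2
  obtain ⟨C₀, hC₀⟩ := (Set.finite_range fun q : Fin n × Fin n => V q.1 q.2).bddAbove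
  set C := max (max C₀ ε) 1
  have hC : ∀ i j, V i j ≤ C := fun i j =>
    (hC₀ ⟨(i, j), rfl⟩).trans ((le_max_left _ _).trans (le_max_left _ _))
  have hεC : ε ≤ C := (le_max_right _ _).trans (le_max_left _ _)
  have hC₁ : 0 < C := one_pos.trans_le (le_max_right _ _)
  have small : ∀ c d : ℝ, 0 < d → ∀ᶠ η in 𝓝[>] (0 : ℝ), c * η < d := fun c d hd =>
    nhdsWithin_le_nhds <| ((continuous_const_mul c).tendsto 0).eventually (gt_mem_nhds (by simpa))
  obtain ⟨η, ⟨hηn, hηb, hηC⟩, hη₀⟩ := ((small (n + 1) 1 one_pos).and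
    ((small (2 * b ^ 2) v hv₀).and (small (2 * C ^ 2 * n ^ 2) (a ^ 2 * v) (by positivity)))).and
    self_mem_nhdsWithin |>.exists
  have hδ₀ := ladder_pos hη₀ n
  have large : ∀ c d : ℝ, 0 < c → ∀ᶠ S in atTop, d < c * S ^ 2 := fun c d hc =>
    ((tendsto_pow_atTop two_ne_zero).const_mul_atTop hc).eventually_gt_atTop d
  obtain ⟨S₀, hS₀⟩ := eventually_atTop.1 <| (eventually_ge_atTop 1).and <|
    (large (a ^ 2 * v * ladder η n ^ 2) (2 * C * n ^ 2) (by positivity)).and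
    (large (4 * a ^ 2 * ladder η n) n (by positivity))
  refine ⟨S₀, fun s hs t ht r rt h => ?_⟩
  by_contra! hlt
  obtain ⟨hS₁, hSC, hSn⟩ := hS₀ _ hlt.le
  have has : a ^ 2 ≤ s ^ 2 := by gcongr; exact hs.1
  have hsb : s ^ 2 ≤ b ^ 2 := by gcongr; exacts [ha.le.trans hs.1, hs.2]
  have hbound := h.four_sq_mul_ladder_mul_sq_sum_le hV (ha.trans_le hs.1).ne' ht.1 hC
    (ht.2.trans hεC) (fun i j => hv (i, j)) hv₀ hη₀ hηn (by nlinarith) (by nlinarith) hS₁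
    (hSC.le.trans (by gcongr))
  have : 4 * a ^ 2 * ladder η n ≤ 4 * s ^ 2 * ladder η n := by gcongr
  nlinarith

theorem stmt_3_general (n : ℕ) (V : Matrix (Fin n) (Fin n) ℝ)
    (hV : ∀ i j, 0 ≤ V i j)
    (hirr : ∀ i j, ∃ k : ℕ, 1 ≤ k ∧ 0 < (V ^ k) i j)
    (R : ℝ → ℝ → (Fin n → ℝ) × (Fin n → ℝ))
    (hR : ∀ s t : ℝ, 0 < s → 0 < t → RMEsol V s t (R s t)) :
    (∀ a b : ℝ, 0 < a → a ≤ b → ∀ ε : ℝ, 0 < ε →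
      ∃ M : ℝ, ∀ s ∈ Set.Icc a b, ∀ t ∈ Set.Ioc (0 : ℝ) ε, ‖R s t‖ ≤ M) ∧
    (∀ s : ℝ, 0 < s →
      ∃ x : (Fin n → ℝ) × (Fin n → ℝ),
        MapClusterPt x (nhdsWithin 0 (Set.Ioi (0 : ℝ))) (fun t => R s t)) := by
  have hirr' : V.IsIrreducible := (isIrreducible_iff_exists_pow_pos hV).2 hirr
  have hbound : ∀ a b : ℝ, 0 < a → a ≤ b → ∀ ε : ℝ, 0 < ε →
      ∃ M : ℝ, ∀ s ∈ Set.Icc a b, ∀ t ∈ Set.Ioc (0 : ℝ) ε, ‖R s t‖ ≤ M := by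
    intro a b ha _ ε _
    obtain ⟨M, hM⟩ := exists_sum_fst_le hirr' (b := b) (ε := ε) ha
    refine ⟨M, fun s hs t ht => ?_⟩
    have h := hR s t (ha.trans_le hs.1) ht.1
    exact (h.norm_le_sum ht.1.ne').trans (hM s hs t ht _ _ h)
  refine ⟨hbound, fun s hs => ?_⟩
  obtain ⟨M, hM⟩ := hbound s s hs le_rfl 1 one_pos
  have hball : ∀ᶠ t in nhdsWithin 0 (Set.Ioi (0 : ℝ)), R s t ∈ Metric.closedBall 0 M :=
    eventually_of_mem (Ioc_mem_nhdsGT one_pos) fun t ht =>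
      mem_closedBall_zero_iff.2 (hM s ⟨le_rfl, le_rfl⟩ t ht)
  obtain ⟨x, -, hx⟩ :=
    (isCompact_closedBall _ _).exists_mapClusterPt_of_frequently hball.frequently
  exact ⟨x, hx⟩

/-- uniform boundedness of the solution of the Regularized Master
Equations on `[a,b] × (0,ε]`, and existence of accumulation points as `t ↓ 0`. -/
theorem stmt_3 (n : ℕ) (hn : 1 ≤ n) (V : Matrix (Fin n) (Fin n) ℝ)
    (hV : ∀ i j, 0 ≤ V i j)
    (hirr : ∀ i j, ∃ k : ℕ, 1 ≤ k ∧ 0 < (V ^ k) i j)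
    (R : ℝ → ℝ → (Fin n → ℝ) × (Fin n → ℝ))
    (hR : ∀ s t : ℝ, 0 < s → 0 < t → RMEsol V s t (R s t)) :
    (∀ a b : ℝ, 0 < a → a ≤ b → ∀ ε : ℝ, 0 < ε →
      ∃ M : ℝ, ∀ s ∈ Set.Icc a b, ∀ t ∈ Set.Ioc (0 : ℝ) ε, ‖R s t‖ ≤ M) ∧
    (∀ s : ℝ, 0 < s →
      ∃ x : (Fin n → ℝ) × (Fin n → ℝ),
        MapClusterPt x (nhdsWithin 0 (Set.Ioi (0 : ℝ))) (fun t => R s t)) :=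
  stmt_3_general n V hV hirr R hR
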